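/- arXiv:1609.06860 — 5 statements merged into one kernel-verified Lean document; each statement's English description precedes it below -/
import Mathlib

section
/- Let h : ℝ → ℝ be strictly convex on (0,∞), G = {(x₁,x₂) : x₁ > 0, x₂ ≥ h(x₁)}, ∂G = {(x,h(x)) : x > 0}. Let D₁, D₂ ⊆ G be disjoint convex sets with ∂G ∩ D₁ = {p₁} and ∂G ∩ D₂ = {p₂}, where p₁ ≠ p₂. Then (convexHull ℝ (D₁ ∪ D₂)) ∩ ∂G = {p₁, p₂}. -/
/-!
The graph of a strictly convex function consists of extreme points of its epigraph `G`: a point of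
the graph lying strictly inside a segment of `G` would violate strict convexity if the endpoints had
different abscissae, and would force both endpoints onto itself otherwise. The convex hull of
`D₁ ∪ D₂ ⊆ G` stays inside the convex set `G`, and an extreme point of `G` lying in the convex hull
of a subset must belong to that subset. Hence a graph point of the hull lies in `D₁` or `D₂`.
-/

open Set

theorem StrictConvexOn.graph_subset_extremePoints_epigraph {𝕜 E β : Type*} [Semiring 𝕜]
    [PartialOrder 𝕜] [AddCommMonoid E] [Module 𝕜 E] [AddCommMonoid β] [PartialOrder β]
    [IsOrderedCancelAddMonoid β] [Module 𝕜 β] [PosSMulStrictMono 𝕜 β] {s : Set E} {f : E → β}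
    (hf : StrictConvexOn 𝕜 s f) :
    {p : E × β | p.1 ∈ s ∧ p.2 = f p.1} ⊆
      {p : E × β | p.1 ∈ s ∧ f p.1 ≤ p.2}.extremePoints 𝕜 := by
  rintro ⟨x, y⟩ ⟨hx, hy : y = f x⟩
  subst hy
  refine ⟨⟨hx, le_rfl⟩, ?_⟩
  rintro ⟨x₁, r₁⟩ ⟨hx₁, hr₁ : f x₁ ≤ r₁⟩ ⟨x₂, r₂⟩ ⟨hx₂, hr₂ : f x₂ ≤ r₂⟩ ⟨a, b, ha, hb, hab, hcombo⟩
  simp only [Prod.smul_mk, Prod.mk_add_mk, Prod.mk.injEq] at hcombo ⊢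
  obtain ⟨rfl, hr⟩ := hcombo
  obtain rfl | hne := eq_or_ne x₁ x₂
  · rw [Convex.combo_self hab] at hr ⊢
    refine ⟨rfl, by_contra fun hne => lt_irrefl (f x₁) ?_⟩
    calc f x₁ = a • f x₁ + b • f x₁ := (Convex.combo_self hab _).symm
      _ < a • r₁ + b • r₂ := add_lt_add_of_lt_of_le
          (smul_lt_smul_of_pos_left (hr₁.lt_of_ne' hne) ha) (smul_le_smul_of_nonneg_left hr₂ hb.le)
      _ = f x₁ := hr
  · refine absurd ?_ (hf.2 hx₁ hx₂ hne ha hb hab).not_ge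
    rw [← hr]
    gcongr

theorem Convex.convexHull_inter_extremePoints_subset {𝕜 E : Type*} [Ring 𝕜] [LinearOrder 𝕜]
    [IsStrictOrderedRing 𝕜] [DenselyOrdered 𝕜] [AddCommGroup E] [Module 𝕜 E]
    [Module.IsTorsionFree 𝕜 E]
    {A S : Set E} (hA : Convex 𝕜 A) (hSA : S ⊆ A) :
    convexHull 𝕜 S ∩ A.extremePoints 𝕜 ⊆ S :=
  (inter_extremePoints_subset_extremePoints_of_subset (convexHull_min hSA hA)).trans
    extremePoints_convexHull_subset

theorem stmt1_general (h : ℝ → ℝ) (hconv : StrictConvexOn ℝ (Ioi (0:ℝ)) h)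
    (G Gb : Set (ℝ × ℝ))
    (hG : G = {p : ℝ × ℝ | 0 < p.1 ∧ h p.1 ≤ p.2})
    (hGb : Gb = {p : ℝ × ℝ | 0 < p.1 ∧ p.2 = h p.1})
    (D₁ D₂ : Set (ℝ × ℝ))
    (hD₁G : D₁ ⊆ G) (hD₂G : D₂ ⊆ G)
    (p₁ p₂ : ℝ × ℝ)
    (h₁ : Gb ∩ D₁ = {p₁}) (h₂ : Gb ∩ D₂ = {p₂}) :
    (convexHull ℝ (D₁ ∪ D₂)) ∩ Gb = {p₁, p₂} := by
  have hGconv : Convex ℝ G := hG ▸ hconv.convexOn.convex_epigraph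
  have hGb : Gb ⊆ G.extremePoints ℝ := hGb ▸ hG ▸ hconv.graph_subset_extremePoints_epigraph
  ext q
  constructor
  · rintro ⟨hq, hqGb⟩
    rcases hGconv.convexHull_inter_extremePoints_subset (union_subset hD₁G hD₂G) ⟨hq, hGb hqGb⟩
      with hq₁ | hq₂
    · exact Or.inl (h₁.subset ⟨hqGb, hq₁⟩)
    · exact Or.inr (h₂.subset ⟨hqGb, hq₂⟩)
  · have hp₁ : p₁ ∈ Gb ∩ D₁ := h₁.symm.subset rfl
    have hp₂ : p₂ ∈ Gb ∩ D₂ := h₂.symm.subset rfl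
    rintro (rfl | rfl)
    · exact ⟨subset_convexHull ℝ _ (Or.inl hp₁.2), hp₁.1⟩
    · exact ⟨subset_convexHull ℝ _ (Or.inr hp₂.2), hp₂.1⟩

theorem stmt1 (h : ℝ → ℝ) (hconv : StrictConvexOn ℝ (Ioi (0:ℝ)) h)
    (G Gb : Set (ℝ × ℝ))
    (hG : G = {p : ℝ × ℝ | 0 < p.1 ∧ h p.1 ≤ p.2})
    (hGb : Gb = {p : ℝ × ℝ | 0 < p.1 ∧ p.2 = h p.1})
    (D₁ D₂ : Set (ℝ × ℝ)) (hD₁ : Convex ℝ D₁) (hD₂ : Convex ℝ D₂)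
    (hD₁G : D₁ ⊆ G) (hD₂G : D₂ ⊆ G) (hdisj : Disjoint D₁ D₂)
    (p₁ p₂ : ℝ × ℝ) (hne : p₁ ≠ p₂)
    (h₁ : Gb ∩ D₁ = {p₁}) (h₂ : Gb ∩ D₂ = {p₂}) :
    (convexHull ℝ (D₁ ∪ D₂)) ∩ Gb = {p₁, p₂} :=
  stmt1_general h hconv G Gb hG hGb D₁ D₂ hD₁G hD₂G p₁ p₂ h₁ h₂
end

section
/- Let D₂ ⊆ ℝ² be a nonempty convex set, ẑ ∈ ℝ², r̂ > 0, and for α ∈ [0,1) let D_α = closedBall ẑ (α·r̂), D₁ = closedBall ẑ r̂. Then ⋃_{α ∈ [0,1)} convexHull ℝ (D_α ∪ D₂) = convexHull ℝ ((interior D₁) ∪ D₂). -/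
open Set Metric

/-!
The open ball is the increasing union of the closed balls `closedBall z (α * r)`, `α ∈ [0, 1)`,
and taking convex hulls commutes with increasing unions, because an increasing union of
convex sets is convex.
-/

theorem Directed.convexHull_iUnion {𝕜 E ι : Type*} [Field 𝕜] [LinearOrder 𝕜] [IsStrictOrderedRing 𝕜]
    [AddCommGroup E] [Module 𝕜 E] {s : ι → Set E} (hdir : Directed (· ⊆ ·) s) :
    convexHull 𝕜 (⋃ i, s i) = ⋃ i, convexHull 𝕜 (s i) := by
  refine (convexHull_min (iUnion_mono fun i => subset_convexHull 𝕜 (s i)) ?_).antisymm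
    (iUnion_subset fun i => convexHull_mono (subset_iUnion s i))
  exact (hdir.mono_comp _ fun _ _ h => convexHull_mono h).convex_iUnion
    fun i => convex_convexHull 𝕜 (s i)

theorem Metric.ball_eq_biUnion_closedBall_mul {α : Type*} [PseudoMetricSpace α] (z : α) {r : ℝ}
    (hr : 0 < r) : ball z r = ⋃ a ∈ Ico (0 : ℝ) 1, closedBall z (a * r) := by
  refine Subset.antisymm (fun x hx => mem_iUnion₂.mpr ?_)
    (iUnion₂_subset fun a ha => closedBall_subset_ball (by nlinarith [ha.2]))
  refine ⟨dist x z / r, ⟨by positivity, (div_lt_one hr).mpr (mem_ball.mp hx)⟩, ?_⟩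
  rw [mem_closedBall, div_mul_cancel₀ _ hr.ne']

theorem stmt3_general (D₂ : Set (EuclideanSpace ℝ (Fin 2)))
    (z : EuclideanSpace ℝ (Fin 2)) (r : ℝ) (hr : 0 < r) :
    (⋃ α ∈ Ico (0:ℝ) 1, convexHull ℝ (closedBall z (α * r) ∪ D₂))
      = convexHull ℝ (interior (closedBall z r) ∪ D₂) := by
  have : Nonempty (Ico (0 : ℝ) 1) := ⟨⟨0, le_rfl, one_pos⟩⟩
  have hmono : Monotone fun α : Ico (0 : ℝ) 1 => closedBall z (α * r) ∪ D₂ := fun α β hαβ =>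
    union_subset_union_left _ (closedBall_subset_closedBall
      (mul_le_mul_of_nonneg_right (Subtype.mono_coe _ hαβ) hr.le))
  rw [interior_closedBall z hr.ne', ball_eq_biUnion_closedBall_mul z hr]
  simp only [biUnion_eq_iUnion]
  rw [iUnion_union, hmono.directed_le.convexHull_iUnion]

theorem stmt3 (D₂ : Set (EuclideanSpace ℝ (Fin 2))) (hD₂ : Convex ℝ D₂) (hne : D₂.Nonempty)
    (z : EuclideanSpace ℝ (Fin 2)) (r : ℝ) (hr : 0 < r) :
    (⋃ α ∈ Ico (0:ℝ) 1, convexHull ℝ (closedBall z (α * r) ∪ D₂))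
      = convexHull ℝ (interior (closedBall z r) ∪ D₂) :=
  stmt3_general D₂ z r hr
end

section
/- Let {S_n} be an increasing sequence of sets in a finite-dimensional real normed space E, with each S_n convex, and suppose S = ⋃_n S_n. Then any point p ∈ convexHull ℝ S in fact lies in S, i.e. S is convex; moreover if closure S has nonempty interior, then some S_{N₀} has nonempty interior. -/
/-!
A directed union of convex sets is convex. In finite dimensions a convex set has nonempty interior
exactly when its affine span is the whole space, and taking the closure does not change the affine
span since affine subspaces are closed. A spanning set contains a finite spanning subset (an affine
basis), and by directedness that finite set already lies in a single `S n`.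
-/

theorem affineSpan_closure {E : Type*} [NormedAddCommGroup E] [NormedSpace ℝ E]
    [FiniteDimensional ℝ E] (s : Set E) : affineSpan ℝ (closure s) = affineSpan ℝ s :=
  le_antisymm
    (affineSpan_le.2 <|
      closure_minimal (subset_affineSpan ℝ s) (affineSpan ℝ s).closed_of_finiteDimensional)
    (affineSpan_mono ℝ subset_closure)

theorem Directed.exists_affineSpan_eq_top {k V P ι : Type*} [DivisionRing k] [AddCommGroup V]
    [Module k V] [AddTorsor V P] [FiniteDimensional k V] [Nonempty ι] {S : ι → Set P}
    (hS : Directed (· ⊆ ·) S) (h : affineSpan k (⋃ i, S i) = ⊤) :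
    ∃ i, affineSpan k (S i) = ⊤ := by
  obtain ⟨t, hts, b, hb⟩ := AffineBasis.exists_affine_subbasis h
  have hspan : affineSpan k t = ⊤ := by
    rw [← b.tot, hb, Subtype.range_coe]
  lift t to Finset P using b.finite_set
  obtain ⟨i, hti⟩ := hS.exists_mem_subset_of_finset_subset_biUnion hts
  exact ⟨i, top_unique (hspan ▸ affineSpan_mono k hti)⟩

theorem Directed.exists_interior_nonempty_of_interior_closure_iUnion {E ι : Type*}
    [NormedAddCommGroup E] [NormedSpace ℝ E] [FiniteDimensional ℝ E] [Nonempty ι]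
    {S : ι → Set E} (hS : Directed (· ⊆ ·) S) (hconv : ∀ i, Convex ℝ (S i))
    (h : (interior (closure (⋃ i, S i))).Nonempty) : ∃ i, (interior (S i)).Nonempty := by
  rw [(hS.convex_iUnion hconv).closure.interior_nonempty_iff_affineSpan_eq_top,
    affineSpan_closure] at h
  obtain ⟨i, hi⟩ := hS.exists_affineSpan_eq_top h
  exact ⟨i, (hconv i).interior_nonempty_iff_affineSpan_eq_top.2 hi⟩

theorem stmt5 {E : Type*} [NormedAddCommGroup E] [NormedSpace ℝ E] [FiniteDimensional ℝ E]
    (S : ℕ → Set E) (hmono : Monotone S) (hconv : ∀ n, Convex ℝ (S n)) :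
    convexHull ℝ (⋃ n, S n) = ⋃ n, S n ∧
      ((interior (closure (⋃ n, S n))).Nonempty → ∃ N₀, (interior (S N₀)).Nonempty) := by
  have hdir : Directed (· ⊆ ·) S := hmono.directed_le
  exact ⟨(hdir.convex_iUnion hconv).convexHull_eq,
    hdir.exists_interior_nonempty_of_interior_closure_iUnion hconv⟩
end

section
/- Let E be a finite-dimensional real normed space, S̄ ⊆ E a bounded closed convex set whose interior contains a point y. Then for every λ ∈ (0,1) and any increasing sequence of convex sets S_n ⊆ E with ⋃ S_n dense in S̄, there exists N such that for all n ≥ N, λ • (S̄ - {y}) ⊆ S_n - {y}. -/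
/-!
The union `T = ⋃ n, S n` is convex with closure `Sbar`, and in finite dimensions a convex set and
its closure have the same interior. Hence the compact convex set `homothety y lam '' Sbar`, which
lies in the interior of `Sbar`, lies in the interior of `T`. It can then be wrapped in the convex
hull of finitely many points of `T`, and these all lie in a single `S n`.
-/

open Set Pointwise AffineMap Filter

theorem Convex.image_homothety_closure_subset_interior {𝕜 E : Type*} [Field 𝕜] [LinearOrder 𝕜]
    [IsStrictOrderedRing 𝕜] [AddCommGroup E] [Module 𝕜 E] [TopologicalSpace E]
    [IsTopologicalAddGroup E] [ContinuousConstSMul 𝕜 E] {s : Set E} (hs : Convex 𝕜 s) {x : E}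
    (hx : x ∈ interior s) {t : 𝕜} (ht₀ : 0 ≤ t) (ht₁ : t < 1) :
    homothety x t '' closure s ⊆ interior s := by
  rintro _ ⟨v, hv, rfl⟩
  have hmem := hs.combo_interior_closure_mem_interior hx hv (sub_pos.mpr ht₁) ht₀ (by ring)
  rw [homothety_apply, vsub_eq_sub, vadd_eq_add]
  convert hmem using 1
  module

theorem image_homothety_sub_singleton {k V : Type*} [CommRing k] [AddCommGroup V] [Module k V]
    (x : V) (c : k) (s : Set V) : homothety x c '' s - {x} = c • (s - {x}) := by
  simp only [sub_singleton, ← image_smul, image_image, homothety_apply, vsub_eq_sub,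
    vadd_eq_add, add_sub_cancel_right]

theorem Convex.interior_closure_eq_interior {E : Type*} [NormedAddCommGroup E] [NormedSpace ℝ E]
    [FiniteDimensional ℝ E] {s : Set E} (hs : Convex ℝ s) :
    interior (closure s) = interior s := by
  rcases (interior (closure s)).eq_empty_or_nonempty with h | h
  · exact h.trans (subset_empty_iff.mp (h ▸ interior_mono subset_closure)).symm
  apply hs.interior_closure_eq_interior_of_nonempty_interior
  rw [hs.interior_nonempty_iff_affineSpan_eq_top, eq_top_iff,
    ← hs.closure.interior_nonempty_iff_affineSpan_eq_top.mp h]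
  exact affineSpan_le.mpr <|
    closure_minimal (subset_affineSpan ℝ s) (affineSpan ℝ s).closed_of_finiteDimensional

theorem IsCompact.eventually_subset_of_subset_interior_iUnion {ι E : Type*} [Preorder ι]
    [IsDirected ι (· ≤ ·)] [Nonempty ι] [NormedAddCommGroup E] [NormedSpace ℝ E]
    [FiniteDimensional ℝ E] {K : Set E} {S : ι → Set E} (hK : IsCompact K) (hKc : Convex ℝ K)
    (hS : Monotone S) (hSc : ∀ i, Convex ℝ (S i)) (hKS : K ⊆ interior (⋃ i, S i)) :
    ∀ᶠ i in atTop, K ⊆ S i := by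
  obtain ⟨u, hKu, hu⟩ := hKc.exists_subset_interior_convexHull_finset_of_isCompact hK
    (subset_interior_iff_mem_nhdsSet.mp hKS)
  obtain ⟨i, hi⟩ := hS.directed_le.exists_mem_subset_of_finset_subset_biUnion
    ((subset_convexHull ℝ _).trans hu)
  filter_upwards [eventually_ge_atTop i] with j hj
  exact hKu.trans <| interior_subset.trans <| convexHull_min (hi.trans (hS hj)) (hSc j)

theorem stmt6 {E : Type*} [NormedAddCommGroup E] [NormedSpace ℝ E] [FiniteDimensional ℝ E]
    (Sbar : Set E) (hb : Bornology.IsBounded Sbar) (hcl : IsClosed Sbar) (hconv : Convex ℝ Sbar)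
    (y : E) (hy : y ∈ interior Sbar) (lam : ℝ) (hlam : lam ∈ Ioo (0:ℝ) 1)
    (S : ℕ → Set E) (hmono : Monotone S) (hSconv : ∀ n, Convex ℝ (S n))
    (hsub : ∀ n, S n ⊆ Sbar) (hdense : Sbar ⊆ closure (⋃ n, S n)) :
    ∃ N, ∀ n ≥ N, lam • (Sbar - {y}) ⊆ S n - {y} := by
  have hT : Convex ℝ (⋃ n, S n) := hmono.directed_le.convex_iUnion fun n => hSconv n
  have hclosure : closure (⋃ n, S n) = Sbar :=
    (closure_minimal (iUnion_subset hsub) hcl).antisymm hdense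
  have hyT : y ∈ interior (⋃ n, S n) := by
    rwa [← hT.interior_closure_eq_interior, hclosure]
  have hK : homothety y lam '' Sbar ⊆ interior (⋃ n, S n) :=
    hclosure ▸ hT.image_homothety_closure_subset_interior hyT hlam.1.le hlam.2
  have hKc : IsCompact (homothety y lam '' Sbar) :=
    (Metric.isCompact_of_isClosed_isBounded hcl hb).image (homothety_continuous y lam)
  obtain ⟨N, hN⟩ := eventually_atTop.mp <|
    hKc.eventually_subset_of_subset_interior_iUnion (hconv.affine_image _) hmono hSconv hK
  exact ⟨N, fun n hn => image_homothety_sub_singleton y lam Sbar ▸ sub_subset_sub_right (hN n hn)⟩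
end

section
/- Let f : (0,∞) → ℝ be continuous with f(t) → +∞ as t → 0⁺, and suppose there exist 0 < τ₁ < T₁ < τ₂ < T₂ with 0 = f(T₂) ≤ f(T₁) < f(τ₂) < inf_{0<t≤τ₁} f(t) and f(t) > 0 for all t ∈ (0,T₂). Define M₀ = inf_{τ₁ ≤ t ≤ τ₂} f(t) and T(M) = inf{t > 0 : f(t) ≤ M}. Then M₀ > 0, there exists T̂ ∈ (τ₁, τ₂) with f(T̂) = M₀ = inf_{0<t≤τ₂} f(t), and the graph set G = {(M, T(M)) : M ≥ 0, T(M) < ∞} satisfies: T(M) ≤ T̂ < τ₂ for all M ≥ M₀, and τ₂ ≤ T(M) ≤ T₂ for all 0 ≤ M < M₀; in particular G is not connected. -/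
/-!
The minimum `T̂` of `f` on `[τ₁, τ₂]` lies strictly inside, since `f T₁ < f τ₂ < f` on `(0, τ₁]`;
the same inequalities make it the minimum on all of `(0, τ₂]`. Hence a level `M ≥ M₀ = f T̂` is
first reached by time `T̂`, while a level `M < M₀` is not reached before `τ₂` (but by `T₂`, where
`f` vanishes). The graph thus has points with second coordinate `≤ T̂` and points with second
coordinate `≥ τ₂`, and none in between, so its continuous image under the second projection is
not an interval.
-/

open Set Filter Topology ENNReal

/-- For a set of reals not bounded below, `sInf` is the junk value `0`, so `a < sInf s` with
`0 ≤ a` forces `s` to be bounded below. -/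
theorem Real.lt_of_nonneg_of_lt_sInf {s : Set ℝ} {a x : ℝ} (ha : 0 ≤ a) (h : a < sInf s)
    (hx : x ∈ s) : a < x := by
  by_cases hs : BddBelow s
  · exact h.trans_le (csInf_le hs hx)
  · rw [Real.sInf_of_not_bddBelow hs] at h
    exact absurd h ha.not_gt

theorem IsMinOn.csInf_image_eq {α β : Type*} [ConditionallyCompleteLattice β] {f : α → β}
    {s : Set α} {x : α} (h : IsMinOn f s x) (hx : x ∈ s) : sInf (f '' s) = f x :=
  (h.isGLB hx).csInf_eq ⟨f x, mem_image_of_mem f hx⟩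

theorem exists_mem_Ioo_isMinOn_Ioc {f : ℝ → ℝ} {l a b c : ℝ} (hla : l < a)
    (hf : ContinuousOn f (Icc a b)) (hc : c ∈ Icc a b) (hcb : f c < f b)
    (hleft : ∀ t ∈ Ioc l a, f b < f t) : ∃ x ∈ Ioo a b, IsMinOn f (Ioc l b) x := by
  have hca : f c < f a := hcb.trans (hleft a ⟨hla, le_rfl⟩)
  obtain ⟨x, hx, hmin⟩ := isCompact_Icc.exists_isMinOn_mem_subset hf hc (s := Ioo a b) <| by
    rw [Icc_sdiff_Ioo_same (hc.1.trans hc.2)]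
    rintro _ (rfl | rfl)
    exacts [hca, hcb]
  refine ⟨x, hx, fun t ht => ?_⟩
  rcases le_or_gt t a with hta | hat
  · exact ((hmin hc).trans (hcb.trans (hleft t ⟨ht.1, hta⟩)).le)
  · exact hmin ⟨hat.le, ht.2⟩

theorem not_isPreconnected_of_gap {X α : Type*} [TopologicalSpace X] [LinearOrder α]
    [TopologicalSpace α] [OrderClosedTopology α] [DenselyOrdered α] {s : Set X} {g : X → α}
    (hg : Continuous g) {a b : α} (hab : a < b) (hgap : ∀ p ∈ s, g p ≤ a ∨ b ≤ g p)
    {p q : X} (hp : p ∈ s) (hq : q ∈ s) (hpa : g p ≤ a) (hqb : b ≤ g q) :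
    ¬ IsPreconnected s := by
  intro hs
  obtain ⟨c, hac, hcb⟩ := exists_between hab
  obtain ⟨r, hr, hrc⟩ :=
    hs.intermediate_value hp hq hg.continuousOn ⟨hpa.trans hac.le, hcb.le.trans hqb⟩
  rcases hgap r hr with h | h
  · exact (h.trans_lt hac).ne hrc
  · exact (hcb.trans_le h).ne' hrc

theorem ENNReal.exists_eq_ofReal_mem_Icc {x : ℝ≥0∞} {a b : ℝ} (hb : 0 ≤ b)
    (hax : ENNReal.ofReal a ≤ x) (hxb : x ≤ ENNReal.ofReal b) :
    ∃ s ∈ Icc a b, x = ENNReal.ofReal s := by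
  have hx : x ≠ ⊤ := ne_top_of_le_ne_top ofReal_ne_top hxb
  exact ⟨x.toReal, ⟨(ofReal_le_iff_le_toReal hx).1 hax, toReal_le_of_le_ofReal hb hxb⟩,
    (ofReal_toReal hx).symm⟩

/-- The paper's `T(M)`; it is `⊤` when the level `M` is never reached. -/
noncomputable def minimalTime (f : ℝ → ℝ) (M : ℝ) : ℝ≥0∞ :=
  ⨅ t ∈ {t : ℝ | 0 < t ∧ f t ≤ M}, ENNReal.ofReal t

section minimalTime

variable {f : ℝ → ℝ} {M : ℝ}

theorem minimalTime_le_ofReal {t : ℝ} (ht : 0 < t) (hft : f t ≤ M) :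
    minimalTime f M ≤ ENNReal.ofReal t :=
  iInf₂_le t ⟨ht, hft⟩

theorem ofReal_le_minimalTime {a : ℝ} (h : ∀ t ∈ Ioc 0 a, M < f t) :
    ENNReal.ofReal a ≤ minimalTime f M :=
  le_iInf₂ fun t ⟨ht, hft⟩ =>
    ofReal_le_ofReal (not_lt.1 fun hta => (h t ⟨ht, hta.le⟩).not_ge hft)

end minimalTime

theorem stmt19_general (f : ℝ → ℝ) (hcont : ContinuousOn f (Ioi (0:ℝ)))
    (τ₁ T₁ τ₂ T₂ : ℝ) (h01 : 0 < τ₁) (h12 : τ₁ < T₁) (h23 : T₁ < τ₂) (h34 : τ₂ < T₂)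
    (hT₂ : f T₂ = 0) (hw1 : f T₁ < f τ₂)
    (hw2 : f τ₂ < sInf (f '' Ioc 0 τ₁))
    (hpos : ∀ t ∈ Ioo 0 T₂, 0 < f t)
    (M₀ : ℝ) (hM₀ : M₀ = sInf (f '' Icc τ₁ τ₂))
    (T : ℝ → ℝ≥0∞)
    (hT : T = fun M => ⨅ t ∈ {t : ℝ | 0 < t ∧ f t ≤ M}, ENNReal.ofReal t)
    (G : Set (ℝ × ℝ))
    (hG : G = {p : ℝ × ℝ | 0 ≤ p.1 ∧ 0 < p.2 ∧ T p.1 = ENNReal.ofReal p.2}) :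
    0 < M₀ ∧
    (∃ That ∈ Ioo τ₁ τ₂, f That = M₀ ∧ M₀ = sInf (f '' Ioc 0 τ₂) ∧
      (∀ M, M₀ ≤ M → T M ≤ ENNReal.ofReal That) ∧
      (∀ M, 0 ≤ M → M < M₀ → ENNReal.ofReal τ₂ ≤ T M ∧ T M ≤ ENNReal.ofReal T₂)) ∧
    ¬ IsPreconnected G := by
  change T = minimalTime f at hT
  subst hT hG
  have hleft : ∀ t ∈ Ioc 0 τ₁, f τ₂ < f t := fun t ht =>
    Real.lt_of_nonneg_of_lt_sInf (hpos τ₂ ⟨by linarith, h34⟩).le hw2 (mem_image_of_mem f ht)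
  obtain ⟨That, hThat, hmin⟩ := exists_mem_Ioo_isMinOn_Ioc h01
    (hcont.mono fun t ht => h01.trans_le ht.1) ⟨h12.le, h23.le⟩ hw1 hleft
  have hThat₀ : 0 < That := h01.trans hThat.1
  have hM₀_eq : M₀ = f That :=
    hM₀ ▸ (hmin.on_subset fun t ht => ⟨h01.trans_le ht.1, ht.2⟩).csInf_image_eq
      (Ioo_subset_Icc_self hThat)
  have hM₀_pos : 0 < M₀ := hM₀_eq ▸ hpos That ⟨hThat₀, hThat.2.trans h34⟩
  have hM₀_lt : ∀ t ∈ Ioc 0 τ₁, M₀ < f t := fun t ht =>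
    hM₀_eq ▸ ((hmin ⟨h01.trans h12, h23.le⟩).trans_lt (hw1.trans (hleft t ht)))
  have hhigh : ∀ M, M₀ ≤ M → minimalTime f M ≤ ENNReal.ofReal That := fun M hM =>
    minimalTime_le_ofReal hThat₀ (hM₀_eq ▸ hM)
  have hlow : ∀ M, 0 ≤ M → M < M₀ →
      ENNReal.ofReal τ₂ ≤ minimalTime f M ∧ minimalTime f M ≤ ENNReal.ofReal T₂ := fun M hM0 hM =>
    ⟨ofReal_le_minimalTime fun t ht => hM.trans_le (hM₀_eq ▸ hmin ht),
      minimalTime_le_ofReal (by linarith) (hT₂ ▸ hM0)⟩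
  refine ⟨hM₀_pos, ⟨That, hThat, hM₀_eq.symm,
    hM₀_eq.trans (hmin.csInf_image_eq ⟨hThat₀, hThat.2.le⟩).symm, hhigh, hlow⟩, ?_⟩
  obtain ⟨s₁, hs₁, hTs₁⟩ :=
    ENNReal.exists_eq_ofReal_mem_Icc hThat₀.le (ofReal_le_minimalTime hM₀_lt) (hhigh M₀ le_rfl)
  obtain ⟨hτ₂_le, hle_T₂⟩ := hlow 0 le_rfl hM₀_pos
  obtain ⟨s₂, hs₂, hTs₂⟩ := ENNReal.exists_eq_ofReal_mem_Icc (by linarith) hτ₂_le hle_T₂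
  refine not_isPreconnected_of_gap continuous_snd hThat.2 (fun p ⟨hp1, hp2, hpT⟩ => ?_)
    (p := (M₀, s₁)) (q := (0, s₂)) ⟨hM₀_pos.le, h01.trans_le hs₁.1, hTs₁⟩
    ⟨le_rfl, by linarith [hs₂.1], hTs₂⟩ hs₁.2 hs₂.1
  rcases le_or_gt M₀ p.1 with h | h
  · exact .inl <| (ofReal_le_ofReal_iff hThat₀.le).1 (hpT ▸ hhigh p.1 h)
  · exact .inr <| (ofReal_le_ofReal_iff hp2.le).1 (hpT ▸ (hlow p.1 hp1 h).1)

theorem stmt19 (f : ℝ → ℝ) (hcont : ContinuousOn f (Ioi (0:ℝ)))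
    (hblow : Tendsto f (𝓝[>] (0:ℝ)) atTop)
    (τ₁ T₁ τ₂ T₂ : ℝ) (h01 : 0 < τ₁) (h12 : τ₁ < T₁) (h23 : T₁ < τ₂) (h34 : τ₂ < T₂)
    (hT₂ : f T₂ = 0) (hT₁ : f T₂ ≤ f T₁) (hw1 : f T₁ < f τ₂)
    (hw2 : f τ₂ < sInf (f '' Ioc 0 τ₁))
    (hpos : ∀ t ∈ Ioo 0 T₂, 0 < f t)
    (M₀ : ℝ) (hM₀ : M₀ = sInf (f '' Icc τ₁ τ₂))
    (T : ℝ → ℝ≥0∞)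
    (hT : T = fun M => ⨅ t ∈ {t : ℝ | 0 < t ∧ f t ≤ M}, ENNReal.ofReal t)
    (G : Set (ℝ × ℝ))
    (hG : G = {p : ℝ × ℝ | 0 ≤ p.1 ∧ 0 < p.2 ∧ T p.1 = ENNReal.ofReal p.2}) :
    0 < M₀ ∧
    (∃ That ∈ Ioo τ₁ τ₂, f That = M₀ ∧ M₀ = sInf (f '' Ioc 0 τ₂) ∧
      (∀ M, M₀ ≤ M → T M ≤ ENNReal.ofReal That) ∧
      (∀ M, 0 ≤ M → M < M₀ → ENNReal.ofReal τ₂ ≤ T M ∧ T M ≤ ENNReal.ofReal T₂)) ∧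
    ¬ IsPreconnected G :=
  stmt19_general f hcont τ₁ T₁ τ₂ T₂ h01 h12 h23 h34 hT₂ hw1 hw2 hpos M₀ hM₀ T hT G hG
end
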